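/- Let Γ be a finite oriented graph with incidence matrix I, f a function on cells, and for s ∈ ℝ define the deformed coboundary d_s = E_f(s) I* E_v(−s), where E_v(s), E_f(s) are the diagonal matrices exp(s f) on vertices and edges respectively. Then the deformed Laplacians Δ_{+,s} = d_s* d_s and Δ_{−,s} = d_s d_s* satisfy dim ker Δ_{+,s} = dim ker Δ₊ and dim ker Δ_{−,s} = dim ker Δ₋ for all s. -/
import Mathlib

open Matrix

lemma aux_finrank_ker_eq_of_rank_eq {m n : Type*} [Fintype m] [Fintype n]
    (A : Matrix m n ℝ) (B : Matrix m n ℝ) (h : A.rank = B.rank) :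
    Module.finrank ℝ (LinearMap.ker A.mulVecLin) =
      Module.finrank ℝ (LinearMap.ker B.mulVecLin) := by
  have hA := LinearMap.finrank_range_add_finrank_ker A.mulVecLin
  have hB := LinearMap.finrank_range_add_finrank_ker B.mulVecLin
  have hr : Module.finrank ℝ (LinearMap.range A.mulVecLin) =
      Module.finrank ℝ (LinearMap.range B.mulVecLin) := h
  omega

/-- For the deformed coboundary `d_s = exp(s f_E) Iᵀ exp(−s f_V)` obtained from a
function `f` on the cells of a finite oriented graph, the kernels of the deformed
Laplacians `Δ_{+,s} = d_s* d_s` and `Δ_{−,s} = d_s d_s*` have the same dimensions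
as the kernels of the undeformed Laplacians `Δ₊ = I Iᵀ` and `Δ₋ = Iᵀ I`. -/
theorem deformed_laplacian_kernel_dim
    (V E : Type*) [Fintype V] [Fintype E] [DecidableEq V] [DecidableEq E]
    (src tgt : E → V)
    (I : Matrix V E ℝ)
    (hI : ∀ v e, I v e = if src e = v then -1 else if tgt e = v then 1 else 0)
    (fV : V → ℝ) (fE : E → ℝ) (s : ℝ)
    (ds : Matrix E V ℝ)
    (hds : ds = Matrix.diagonal (fun e => Real.exp (s * fE e)) * Iᵀ *
      Matrix.diagonal (fun v => Real.exp (-(s * fV v)))) :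
    Module.finrank ℝ (LinearMap.ker (dsᵀ * ds).mulVecLin) =
      Module.finrank ℝ (LinearMap.ker (I * Iᵀ).mulVecLin) ∧
    Module.finrank ℝ (LinearMap.ker (ds * dsᵀ).mulVecLin) =
      Module.finrank ℝ (LinearMap.ker (Iᵀ * I).mulVecLin) := by
  have hDE : IsUnit (Matrix.diagonal (fun e => Real.exp (s * fE e))).det := by
    rw [Matrix.det_diagonal]
    exact isUnit_iff_ne_zero.mpr (Finset.prod_ne_zero_iff.mpr fun e _ => (Real.exp_pos _).ne')
  have hDV : IsUnit (Matrix.diagonal (fun v => Real.exp (-(s * fV v)))).det := by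
    rw [Matrix.det_diagonal]
    exact isUnit_iff_ne_zero.mpr (Finset.prod_ne_zero_iff.mpr fun v _ => (Real.exp_pos _).ne')
  have hrank : ds.rank = Iᵀ.rank := by
    rw [hds, Matrix.rank_mul_eq_left_of_isUnit_det _ _ hDV,
      Matrix.rank_mul_eq_right_of_isUnit_det _ _ hDE]
  have hrankT : dsᵀ.rank = I.rank := by
    have h1 : dsᵀ.rank = ds.rank := by
      have := Matrix.rank_conjTranspose ds
      simpa using this
    have h2 : Iᵀ.rank = I.rank := by
      have := Matrix.rank_conjTranspose I
      simpa using this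
    rw [h1, hrank, h2]
  constructor
  · have k1 : LinearMap.ker (dsᵀ * ds).mulVecLin = LinearMap.ker ds.mulVecLin := by
      have := Matrix.ker_mulVecLin_conjTranspose_mul_self ds
      simpa using this
    have k2 : LinearMap.ker (I * Iᵀ).mulVecLin = LinearMap.ker Iᵀ.mulVecLin := by
      have := Matrix.ker_mulVecLin_conjTranspose_mul_self Iᵀ
      simpa using this
    rw [k1, k2]
    exact aux_finrank_ker_eq_of_rank_eq _ _ hrank
  · have k1 : LinearMap.ker (ds * dsᵀ).mulVecLin = LinearMap.ker dsᵀ.mulVecLin := by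
      have := Matrix.ker_mulVecLin_conjTranspose_mul_self dsᵀ
      simpa using this
    have k2 : LinearMap.ker (Iᵀ * I).mulVecLin = LinearMap.ker I.mulVecLin := by
      have := Matrix.ker_mulVecLin_conjTranspose_mul_self I
      simpa using this
    rw [k1, k2]
    exact aux_finrank_ker_eq_of_rank_eq _ _ hrankT
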